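/- Let r: V→A be a (φ,ψ)-twisted O-operator on a Nambu-Poisson algebra (A, ·, {,,}) over a field k of characteristic 0 with respect to a representation (V;μ,ρ). Define on V the operations u⋄_r v := μ(r(u))v, u*_r v := φ(r(u),r(v)), [u,v,w]_r := ρ(r(u),r(v))w, and ⟦u,v,w⟧_r := ψ(r(u),r(v),r(w)). Then (V, ⋄_r, *_r, [,,]_r, ⟦,,⟧_r) is an NS-Nambu-Poisson algebra, and its subadjacent Nambu-Poisson algebra coincides with (V, ·_r, {,,}_r), where u·_r v := μ(r(u))v + μ(r(v))u + φ(r(u),r(v)) and {u,v,w}_r := ρ(r(u),r(v))w + ρ(r(v),r(w))u + ρ(r(w),r(u))v + ψ(r(u),r(v),r(w)). -/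

import Mathlib

namespace NPPaper

variable {A V : Type*} [AddCommGroup A] [AddCommGroup V]

/-- A commutative associative multiplication (axioms on a plain binary operation). -/
def IsCommAssocFun (m : A → A → A) : Prop :=
  (∀ a b, m a b = m b a) ∧ (∀ a b c, m (m a b) c = m a (m b c))

/-- A 3-Lie bracket: skew-symmetric and satisfying the fundamental identity. -/
def IsThreeLieFun (br : A → A → A → A) : Prop :=
  (∀ a b c, br a b c = - br b a c) ∧ (∀ a b c, br a b c = - br a c b) ∧
  (∀ a b c d e, br a b (br c d e) =
      br (br a b c) d e + br c (br a b d) e + br c d (br a b e))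

/-- A Nambu-Poisson structure: commutative associative product, 3-Lie bracket,
and the Leibniz rule. -/
def IsNambuPoissonFun (m : A → A → A) (br : A → A → A → A) : Prop :=
  IsCommAssocFun m ∧ IsThreeLieFun br ∧
  (∀ a b c d, br a b (m c d) = m (br a b c) d + m c (br a b d))

/-- A representation of a 3-Lie algebra (pointwise form, skew-symmetry included). -/
def IsThreeLieRepFun (br : A → A → A → A) (ρ : A → A → V → V) : Prop :=
  (∀ a b v, ρ a b v = - ρ b a v) ∧
  (∀ a b c d v, ρ a b (ρ c d v) - ρ c d (ρ a b v) =
      ρ (br a b c) d v + ρ c (br a b d) v) ∧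
  (∀ a b c d v, ρ (br a b c) d v =
      ρ a b (ρ c d v) + ρ b c (ρ a d v) + ρ c a (ρ b d v))

/-- A representation of a Nambu-Poisson algebra (pointwise form). -/
def IsNPRepFun (m : A → A → A) (br : A → A → A → A)
    (μ : A → V → V) (ρ : A → A → V → V) : Prop :=
  (∀ a b v, μ (m a b) v = μ a (μ b v)) ∧
  IsThreeLieRepFun br ρ ∧
  (∀ a b c v, μ (br a b c) v = ρ a b (μ c v) - μ c (ρ a b v)) ∧
  (∀ a b c v, ρ a (m b c) v = μ b (ρ a c v) + μ c (ρ a b v))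

/-- A Harrison 2-cocycle of a commutative associative algebra with coefficients
in a representation. -/
def IsHarrison2CocycleFun (m : A → A → A) (μ : A → V → V) (φ : A → A → V) : Prop :=
  (∀ a b, φ a b = φ b a) ∧
  (∀ a b c, μ a (φ b c) - φ (m a b) c + φ a (m b c) - μ c (φ a b) = 0)

/-- A 2-cocycle of a 3-Lie algebra with coefficients in a representation. -/
def IsThreeLie2CocycleFun (br : A → A → A → A) (ρ : A → A → V → V)
    (ψ : A → A → A → V) : Prop :=
  (∀ a b c, ψ a b c = - ψ b a c) ∧ (∀ a b c, ψ a b c = - ψ a c b) ∧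
  (∀ a b c d e, ψ a b (br c d e) + ρ a b (ψ c d e) =
      ψ (br a b c) d e + ψ c (br a b d) e + ψ c d (br a b e)
      + ρ d e (ψ a b c) + ρ e c (ψ a b d) + ρ c d (ψ a b e))

/-- A Nambu-Poisson 2-cocycle. -/
def IsNP2CocycleFun (m : A → A → A) (br : A → A → A → A)
    (μ : A → V → V) (ρ : A → A → V → V)
    (φ : A → A → V) (ψ : A → A → A → V) : Prop :=
  IsHarrison2CocycleFun m μ φ ∧ IsThreeLie2CocycleFun br ρ ψ ∧
  (∀ a b c d, ψ a b (m c d) + ρ a b (φ c d) =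
      φ c (br a b d) + μ c (ψ a b d) + φ (br a b c) d + μ d (ψ a b c))

/-- A Poisson algebra structure. -/
def IsPoissonFun (m : A → A → A) (pb : A → A → A) : Prop :=
  IsCommAssocFun m ∧
  (∀ a b, pb a b = - pb b a) ∧
  (∀ a b c, pb a (pb b c) = pb (pb a b) c + pb b (pb a c)) ∧
  (∀ a b c, pb a (m b c) = m (pb a b) c + m b (pb a c))

/-- A representation of a Poisson algebra (pointwise form). -/
def IsPoissonRepFun (m : A → A → A) (pb : A → A → A) (μ ρb : A → V → V) : Prop :=
  (∀ a b v, μ (m a b) v = μ a (μ b v)) ∧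
  (∀ a b v, ρb (pb a b) v = ρb a (ρb b v) - ρb b (ρb a v)) ∧
  (∀ a b v, μ (pb a b) v = ρb a (μ b v) - μ b (ρb a v)) ∧
  (∀ a b v, ρb (m a b) v = μ a (ρb b v) + μ b (ρb a v))

/-- A Poisson 2-cocycle. -/
def IsPoisson2CocycleFun (m pb : A → A → A) (μ ρb : A → V → V)
    (φ ψb : A → A → V) : Prop :=
  IsHarrison2CocycleFun m μ φ ∧
  (∀ a b, ψb a b = - ψb b a) ∧
  (∀ a b c, ρb a (ψb b c) + ρb b (ψb c a) + ρb c (ψb a b)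
      + ψb a (pb b c) + ψb b (pb c a) + ψb c (pb a b) = 0) ∧
  (∀ a b c, ψb a (m b c) + ρb a (φ b c) =
      φ b (pb a c) + μ b (ψb a c) + φ (pb a b) c + μ c (ψb a b))

/-- A Nijenhuis operator on a Nambu-Poisson algebra. -/
def IsNijenhuisFun (m : A → A → A) (br : A → A → A → A) (N : A → A) : Prop :=
  (∀ a b, m (N a) (N b) = N (m (N a) b + m a (N b) - N (m a b))) ∧
  (∀ a b c, br (N a) (N b) (N c) =
      N (br (N a) (N b) c + br (N a) b (N c) + br a (N b) (N c)
        - N (br (N a) b c + br a (N b) c + br a b (N c) - N (br a b c))))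

/-- The total multiplication `a ⊙ b = a ⋄ b + b ⋄ a + a * b` of an NS-commutative algebra. -/
def odotFun (d s : A → A → A) (a b : A) : A := d a b + d b a + s a b

/-- The total bracket `{{a,b,c}} = [a,b,c] + [b,c,a] + [c,a,b] + ⟦a,b,c⟧` of an NS-3-Lie algebra. -/
def ttotFun (t l : A → A → A → A) (a b c : A) : A :=
  t a b c + t b c a + t c a b + l a b c

/-- An NS-commutative algebra. -/
def IsNSCommFun (d s : A → A → A) : Prop :=
  (∀ a b, s a b = s b a) ∧
  (∀ a b c, d a (d b c) = d (odotFun d s a b) c) ∧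
  (∀ a b c, d a (s b c) + s a (odotFun d s b c) = d b (s a c) + s b (odotFun d s a c))

/-- An NS-3-Lie algebra. -/
def IsNSThreeLieFun (t l : A → A → A → A) : Prop :=
  (∀ a b c, t a b c = - t b a c) ∧
  (∀ a b c, l a b c = - l b a c) ∧ (∀ a b c, l a b c = - l a c b) ∧
  (∀ a b c d e, t a b (t c d e) =
      t (ttotFun t l a b c) d e + t c (ttotFun t l a b d) e + t c d (t a b e)) ∧
  (∀ a b c d e, t (ttotFun t l a b c) d e =
      t a b (t c d e) + t b c (t a d e) + t c a (t b d e)) ∧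
  (∀ a b c d e, l a b (ttotFun t l c d e) + t a b (l c d e) =
      l (ttotFun t l a b c) d e + l c (ttotFun t l a b d) e + l c d (ttotFun t l a b e)
      + t d e (l a b c) + t e c (l a b d) + t c d (l a b e))

/-- An NS-Nambu-Poisson algebra. -/
def IsNSNambuPoissonFun (d s : A → A → A) (t l : A → A → A → A) : Prop :=
  IsNSCommFun d s ∧ IsNSThreeLieFun t l ∧
  (∀ a b c x, d (ttotFun t l a b c) x = t a b (d c x) - d c (t a b x)) ∧
  (∀ a b c x, t (odotFun d s a b) c x = d a (t b c x) + d b (t a c x)) ∧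
  (∀ a b c x, l a b (odotFun d s c x) + t a b (s c x) =
      s c (ttotFun t l a b x) + d c (l a b x) + s (ttotFun t l a b c) x + d x (l a b c))

/-- A `(φ,ψ)`-twisted O-operator. -/
def IsTwistedOFun (m : A → A → A) (br : A → A → A → A)
    (μ : A → V → V) (ρ : A → A → V → V)
    (φ : A → A → V) (ψ : A → A → A → V) (r : V → A) : Prop :=
  (∀ u v, m (r u) (r v) = r (μ (r u) v + μ (r v) u + φ (r u) (r v))) ∧
  (∀ u v w, br (r u) (r v) (r w) =
      r (ρ (r u) (r v) w + ρ (r v) (r w) u + ρ (r w) (r u) v + ψ (r u) (r v) (r w)))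

/- The twisted O-operator identities say precisely that `r` carries the total operations
`u ⊙ v` and `{{u, v, w}}` on `V` to the product and the bracket of `A`. Hence each axiom of an
NS-Nambu-Poisson algebra on `V` is an axiom of the representation or of the cocycle (for the
NS-commutative one, two instances of the Harrison cocycle identity and commutativity of the
product) evaluated at elements `r u`, after replacing `r (u ⊙ v)` by `r u · r v` and
`r {{u, v, w}}` by `{r u, r v, r w}`. -/

section InducedStructure

variable {A V : Type*} [AddCommGroup V] {r : V → A}

theorem IsTwistedOFun.map_odotFun {m : A → A → A} {br : A → A → A → A} {μ : A → V → V}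
    {ρ : A → A → V → V} {φ : A → A → V} {ψ : A → A → A → V}
    (hr : IsTwistedOFun m br μ ρ φ ψ r) (u v : V) :
    r (odotFun (fun u v => μ (r u) v) (fun u v => φ (r u) (r v)) u v) = m (r u) (r v) :=
  (hr.1 u v).symm

theorem IsTwistedOFun.map_ttotFun {m : A → A → A} {br : A → A → A → A} {μ : A → V → V}
    {ρ : A → A → V → V} {φ : A → A → V} {ψ : A → A → A → V}
    (hr : IsTwistedOFun m br μ ρ φ ψ r) (u v w : V) :
    r (ttotFun (fun u v w => ρ (r u) (r v) w) (fun u v w => ψ (r u) (r v) (r w)) u v w) =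
      br (r u) (r v) (r w) :=
  (hr.2 u v w).symm

theorem isNSCommFun_induced {m : A → A → A} {μ : A → V → V} {φ : A → A → V}
    (hm : ∀ a b, m a b = m b a) (hμ : ∀ a b v, μ (m a b) v = μ a (μ b v))
    (hφ : IsHarrison2CocycleFun m μ φ)
    (hr : ∀ u v, r (odotFun (fun u v => μ (r u) v) (fun u v => φ (r u) (r v)) u v) =
      m (r u) (r v)) :
    IsNSCommFun (fun u v => μ (r u) v) (fun u v => φ (r u) (r v)) := by
  obtain ⟨hφ_symm, hφ_cocycle⟩ := hφ
  refine ⟨fun u v => hφ_symm (r u) (r v), fun u v w => ?_, fun u v w => ?_⟩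
  · dsimp only
    rw [hr, hμ]
  · dsimp only
    rw [hr, hr]
    have huvw := hφ_cocycle (r u) (r v) (r w)
    have hvuw := hφ_cocycle (r v) (r u) (r w)
    rw [hm (r v), hφ_symm (r v) (r u)] at hvuw
    linear_combination (norm := abel) huvw - hvuw

theorem isNSThreeLieFun_induced {br : A → A → A → A} {ρ : A → A → V → V}
    {ψ : A → A → A → V} (hρ : IsThreeLieRepFun br ρ) (hψ : IsThreeLie2CocycleFun br ρ ψ)
    (hr : ∀ u v w,
      r (ttotFun (fun u v w => ρ (r u) (r v) w) (fun u v w => ψ (r u) (r v) (r w)) u v w) =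
        br (r u) (r v) (r w)) :
    IsNSThreeLieFun (fun u v w => ρ (r u) (r v) w) (fun u v w => ψ (r u) (r v) (r w)) := by
  obtain ⟨hρ_skew, hρ_fundamental, hρ_bracket⟩ := hρ
  obtain ⟨hψ_skew₁₂, hψ_skew₂₃, hψ_cocycle⟩ := hψ
  refine ⟨fun u v w => hρ_skew (r u) (r v) w, fun u v w => hψ_skew₁₂ (r u) (r v) (r w),
    fun u v w => hψ_skew₂₃ (r u) (r v) (r w), fun a b c d e => ?_, fun a b c d e => ?_,
    fun a b c d e => ?_⟩
  · dsimp only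
    rw [hr, hr]
    linear_combination (norm := abel) hρ_fundamental (r a) (r b) (r c) (r d) e
  · dsimp only
    rw [hr]
    exact hρ_bracket (r a) (r b) (r c) (r d) e
  · dsimp only
    rw [hr, hr, hr, hr]
    exact hψ_cocycle (r a) (r b) (r c) (r d) (r e)

theorem rho_mul_left {m : A → A → A} {μ : A → V → V} {ρ : A → A → V → V}
    (hμ : ∀ a v, μ a (-v) = -μ a v) (hρ_skew : ∀ a b v, ρ a b v = -ρ b a v)
    (hρ_mul : ∀ a b c v, ρ a (m b c) v = μ b (ρ a c v) + μ c (ρ a b v)) (a b c : A) (v : V) :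
    ρ (m a b) c v = μ a (ρ b c v) + μ b (ρ a c v) := by
  rw [hρ_skew, hρ_mul, hρ_skew c b, hρ_skew c a, hμ, hμ]
  abel

theorem IsTwistedOFun.isNSNambuPoissonFun {m : A → A → A} {br : A → A → A → A}
    {μ : A → V → V} {ρ : A → A → V → V} {φ : A → A → V} {ψ : A → A → A → V}
    (hm : ∀ a b, m a b = m b a) (hrep : IsNPRepFun m br μ ρ)
    (hμ : ∀ a v, μ a (-v) = -μ a v) (hcoc : IsNP2CocycleFun m br μ ρ φ ψ)
    (hr : IsTwistedOFun m br μ ρ φ ψ r) :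
    IsNSNambuPoissonFun (fun u v => μ (r u) v) (fun u v => φ (r u) (r v))
      (fun u v w => ρ (r u) (r v) w) (fun u v w => ψ (r u) (r v) (r w)) := by
  obtain ⟨hμ_mul, hρ, hμ_bracket, hρ_mul⟩ := hrep
  obtain ⟨hφ, hψ, hφψ⟩ := hcoc
  refine ⟨isNSCommFun_induced hm hμ_mul hφ hr.map_odotFun,
    isNSThreeLieFun_induced hρ hψ hr.map_ttotFun, fun a b c x => ?_, fun a b c x => ?_,
    fun a b c x => ?_⟩
  · dsimp only
    rw [hr.map_ttotFun]
    exact hμ_bracket (r a) (r b) (r c) x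
  · dsimp only
    rw [hr.map_odotFun]
    exact rho_mul_left hμ hρ.1 hρ_mul (r a) (r b) (r c) x
  · dsimp only
    rw [hr.map_odotFun, hr.map_ttotFun, hr.map_ttotFun]
    exact hφψ (r a) (r b) (r c) (r x)

end InducedStructure

theorem statement19_general {k : Type*} [Field k]
    {A : Type*} [AddCommGroup A] [Module k A]
    {V : Type*} [AddCommGroup V] [Module k V]
    (m : A →ₗ[k] A →ₗ[k] A) (br : A →ₗ[k] A →ₗ[k] A →ₗ[k] A)
    (μ : A →ₗ[k] V →ₗ[k] V) (ρ : A →ₗ[k] A →ₗ[k] V →ₗ[k] V)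
    (φ : A →ₗ[k] A →ₗ[k] V) (ψ : A →ₗ[k] A →ₗ[k] A →ₗ[k] V)
    (hA : IsNambuPoissonFun (fun a b => m a b) (fun a b c => br a b c))
    (hrep : IsNPRepFun (fun a b => m a b) (fun a b c => br a b c)
        (fun a v => μ a v) (fun a b v => ρ a b v))
    (hcoc : IsNP2CocycleFun (fun a b => m a b) (fun a b c => br a b c)
        (fun a v => μ a v) (fun a b v => ρ a b v)
        (fun a b => φ a b) (fun a b c => ψ a b c))
    (r : V →ₗ[k] A)
    (hr : IsTwistedOFun (fun a b => m a b) (fun a b c => br a b c)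
        (fun a v => μ a v) (fun a b v => ρ a b v)
        (fun a b => φ a b) (fun a b c => ψ a b c) (fun v => r v)) :
    IsNSNambuPoissonFun
        (fun u v => μ (r u) v) (fun u v => φ (r u) (r v))
        (fun u v w => ρ (r u) (r v) w) (fun u v w => ψ (r u) (r v) (r w))
      ∧ (∀ u v, odotFun (fun u v => μ (r u) v) (fun u v => φ (r u) (r v)) u v
          = μ (r u) v + μ (r v) u + φ (r u) (r v))
      ∧ (∀ u v w, ttotFun (fun u v w => ρ (r u) (r v) w)
            (fun u v w => ψ (r u) (r v) (r w)) u v w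
          = ρ (r u) (r v) w + ρ (r v) (r w) u + ρ (r w) (r u) v
            + ψ (r u) (r v) (r w)) :=
  ⟨hr.isNSNambuPoissonFun hA.1.1 hrep (fun a => map_neg (μ a)) hcoc,
    fun _ _ => rfl, fun _ _ _ => rfl⟩

theorem statement19 {k : Type*} [Field k] [CharZero k]
    {A : Type*} [AddCommGroup A] [Module k A]
    {V : Type*} [AddCommGroup V] [Module k V]
    (m : A →ₗ[k] A →ₗ[k] A) (br : A →ₗ[k] A →ₗ[k] A →ₗ[k] A)
    (μ : A →ₗ[k] V →ₗ[k] V) (ρ : A →ₗ[k] A →ₗ[k] V →ₗ[k] V)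
    (φ : A →ₗ[k] A →ₗ[k] V) (ψ : A →ₗ[k] A →ₗ[k] A →ₗ[k] V)
    (hA : IsNambuPoissonFun (fun a b => m a b) (fun a b c => br a b c))
    (hrep : IsNPRepFun (fun a b => m a b) (fun a b c => br a b c)
        (fun a v => μ a v) (fun a b v => ρ a b v))
    (hcoc : IsNP2CocycleFun (fun a b => m a b) (fun a b c => br a b c)
        (fun a v => μ a v) (fun a b v => ρ a b v)
        (fun a b => φ a b) (fun a b c => ψ a b c))
    (r : V →ₗ[k] A)
    (hr : IsTwistedOFun (fun a b => m a b) (fun a b c => br a b c)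
        (fun a v => μ a v) (fun a b v => ρ a b v)
        (fun a b => φ a b) (fun a b c => ψ a b c) (fun v => r v)) :
    IsNSNambuPoissonFun
        (fun u v => μ (r u) v) (fun u v => φ (r u) (r v))
        (fun u v w => ρ (r u) (r v) w) (fun u v w => ψ (r u) (r v) (r w))
      ∧ (∀ u v, odotFun (fun u v => μ (r u) v) (fun u v => φ (r u) (r v)) u v
          = μ (r u) v + μ (r v) u + φ (r u) (r v))
      ∧ (∀ u v w, ttotFun (fun u v w => ρ (r u) (r v) w)
            (fun u v w => ψ (r u) (r v) (r w)) u v w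
          = ρ (r u) (r v) w + ρ (r v) (r w) u + ρ (r w) (r u) v
            + ψ (r u) (r v) (r w)) :=
  statement19_general m br μ ρ φ ψ hA hrep hcoc r hr

end NPPaper
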